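/- arXiv:1002.3679 — 5 statements merged into one kernel-verified Lean document; each statement's English description precedes it below -/
import Mathlib

section
/- The 2×2 matrix Q = [[a, c], [0, b]] with complex entries is a contraction (operator norm at most 1) if and only if |a|² + |c|² ≤ 1, |b|² + |c|² ≤ 1, and there exists γ in the closed unit disc with c = γ (1-|a|²)^{1/2} (1-|b|²)^{1/2}. -/
private lemma euclid_normsq (x : EuclideanSpace ℂ (Fin 2)) :
    ‖x‖^2 = ‖x 0‖^2 + ‖x 1‖^2 := by
  rw [EuclideanSpace.norm_eq, Real.sq_sqrt (by positivity)]
  simp [Fin.sum_univ_two]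

private lemma matrix_apply (a b c x y : ℂ) :
    Matrix.toEuclideanCLM (𝕜 := ℂ) !![a, c; 0, b] ((WithLp.equiv 2 _).symm ![x, y]) =
      (WithLp.equiv 2 _).symm ![a*x + c*y, b*y] := by
  simp only [WithLp.equiv_symm_apply, Matrix.toEuclideanCLM_toLp]
  congr 1
  ext i
  fin_cases i <;> simp [Matrix.toLin'_apply, Matrix.mulVec, dotProduct, Fin.sum_univ_two]

theorem scalar_bwd (a b c x y : ℂ) (ha : ‖a‖^2 ≤ 1) (hb : ‖b‖^2 + ‖c‖^2 ≤ 1)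
    (hk : ‖c‖^2 ≤ (1 - ‖a‖^2) * (1 - ‖b‖^2)) :
    ‖a*x + c*y‖^2 + ‖b*y‖^2 ≤ ‖x‖^2 + ‖y‖^2 := by
  have h1 : ‖a*x + c*y‖ ≤ ‖a‖*‖x‖ + ‖c‖*‖y‖ := by
    calc ‖a*x + c*y‖ ≤ ‖a*x‖ + ‖c*y‖ := norm_add_le _ _
    _ = ‖a‖*‖x‖ + ‖c‖*‖y‖ := by rw [norm_mul, norm_mul]
  have h2 : ‖a*x+c*y‖^2 ≤ (‖a‖*‖x‖ + ‖c‖*‖y‖)^2 := by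
    apply pow_le_pow_left₀ (norm_nonneg _) h1
  rw [norm_mul]
  have hx := norm_nonneg x; have hy := norm_nonneg y
  have ha0 := norm_nonneg a; have hb0 := norm_nonneg b; have hc0 := norm_nonneg c
  set r := ‖x‖; set s := ‖y‖
  set A := 1 - ‖a‖^2 with hA
  set B := 1 - ‖b‖^2 - ‖c‖^2 with hB
  have hA0 : 0 ≤ A := by rw [hA]; linarith
  have hB0 : 0 ≤ B := by rw [hB]; linarith
  have key : (2*(‖a‖*‖c‖)*(r*s))^2 ≤ (A*r^2 + B*s^2)^2 := by
    have key0 : ‖a‖^2*‖c‖^2 ≤ A*B := by nlinarith [sq_nonneg ‖c‖]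
    nlinarith [sq_nonneg (A*r^2 - B*s^2), mul_nonneg (mul_nonneg hx hx) (mul_nonneg hy hy)]
  have h3 : 2*(‖a‖*‖c‖)*(r*s) ≤ A*r^2 + B*s^2 := by
    have := Real.sqrt_le_sqrt key
    rwa [Real.sqrt_sq (by positivity), Real.sqrt_sq (by positivity)] at this
  nlinarith [h3]

theorem scalar_fwd (a b c : ℂ)
    (h : ∀ x y : ℂ, ‖a*x + c*y‖^2 + ‖b*y‖^2 ≤ ‖x‖^2 + ‖y‖^2) :
    ‖a‖^2 ≤ 1 ∧ ‖b‖^2 + ‖c‖^2 ≤ 1 ∧ ‖c‖^2 ≤ (1 - ‖a‖^2) * (1 - ‖b‖^2) := by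
  have ha : ‖a‖^2 ≤ 1 := by
    have := h 1 0
    simp only [mul_one, mul_zero, add_zero, norm_zero, norm_one] at this
    nlinarith [sq_nonneg ‖a‖]
  have hb : ‖b‖^2 + ‖c‖^2 ≤ 1 := by
    have := h 0 1
    simp only [mul_one, mul_zero, zero_add, norm_zero, norm_one] at this
    nlinarith
  refine ⟨ha, hb, ?_⟩
  rcases eq_or_ne c 0 with hc | hc
  · rw [hc]; simp only [norm_zero]
    nlinarith [sq_nonneg ‖b‖, sq_nonneg ‖c‖]
  rcases eq_or_ne a 0 with ha0 | ha0
  · rw [ha0]; simp only [norm_zero]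
    nlinarith [sq_nonneg ‖c‖]
  have hc0 : (0:ℝ) < ‖c‖ := norm_pos_iff.mpr hc
  have ha' : (0:ℝ) < ‖a‖ := norm_pos_iff.mpr ha0
  have haA : ‖a‖ ≠ 0 := ha'.ne'
  have hcA : ‖c‖ ≠ 0 := hc0.ne'
  have claim : ∀ r : ℝ, 0 ≤ r → (r*‖a‖+‖c‖)^2 + ‖b‖^2 ≤ r^2 + 1 := by
    intro r hr
    set t : ℝ := r / (‖a‖*‖c‖) with ht0
    have htn : 0 ≤ t := by positivity
    have ht : t * ‖a‖^2 = r*‖a‖/‖c‖ := by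
      rw [ht0]; field_simp [haA, hcA]
    have hx := h (((t : ℝ) : ℂ) * ((starRingEnd ℂ) a * c)) 1
    have e1 : a * (((t : ℝ) : ℂ) * ((starRingEnd ℂ) a * c)) + c * 1
        = (((r*‖a‖/‖c‖ + 1 : ℝ)) : ℂ) * c := by
      calc a * (((t : ℝ) : ℂ) * ((starRingEnd ℂ) a * c)) + c * 1
          = ((t : ℝ) : ℂ) * (a * (starRingEnd ℂ) a) * c + c := by ring
        _ = (((t * ‖a‖^2 : ℝ)) : ℂ) * c + c := by rw [Complex.mul_conj']; push_cast; ring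
        _ = (((r*‖a‖/‖c‖ + 1 : ℝ)) : ℂ) * c := by rw [ht]; push_cast; ring
    rw [e1] at hx
    have e2 : ‖(((r*‖a‖/‖c‖ + 1 : ℝ)) : ℂ) * c‖ = (r*‖a‖/‖c‖ + 1) * ‖c‖ := by
      rw [norm_mul, Complex.norm_real, Real.norm_of_nonneg (by positivity)]
    have e3 : ‖(((t : ℝ) : ℂ) * ((starRingEnd ℂ) a * c))‖ = r := by
      rw [norm_mul, norm_mul, Complex.norm_real, RCLike.norm_conj,
        Real.norm_of_nonneg htn, ht0]
      field_simp [haA, hcA]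
    rw [e2, e3, mul_one, norm_one] at hx
    have e4 : (r*‖a‖/‖c‖ + 1) * ‖c‖ = r*‖a‖ + ‖c‖ := by
      field_simp [hcA]
    rw [e4] at hx
    linarith
  rcases lt_or_eq_of_le ha with hlt | heq
  · set D : ℝ := 1 - ‖a‖^2 with hD
    have hA : (0:ℝ) < D := by rw [hD]; linarith
    set r₀ : ℝ := ‖a‖*‖c‖/D with hr₀def
    have hr₀ : r₀ * D = ‖a‖*‖c‖ := by rw [hr₀def]; field_simp
    have hr := claim r₀ (by positivity)
    have hAA : 1 - ‖a‖ ^ 2 ≠ 0 := by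
      intro hz; rw [hD] at hA; rw [show ((1:ℝ) - ‖a‖^2) = 1 - ‖a‖ ^2 from rfl, hz] at hA
      exact lt_irrefl 0 hA
    have h5 : r₀*‖a‖+‖c‖ = ‖c‖/D := by
      rw [hr₀def, hD]; field_simp [hAA]; ring
    rw [h5] at hr
    have h7 : ‖c‖^2 + ‖b‖^2*D^2 ≤ (‖a‖*‖c‖)^2 + D^2 := by
      have h6 := mul_le_mul_of_nonneg_right hr (sq_nonneg D)
      calc ‖c‖^2 + ‖b‖^2*D^2 = ((‖c‖/D)^2 + ‖b‖^2)*D^2 := by field_simp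
        _ ≤ (r₀^2+1)*D^2 := h6
        _ = (‖a‖*‖c‖)^2 + D^2 := by rw [add_mul, one_mul, ← mul_pow, hr₀]
    rw [hD] at *
    nlinarith [h7, hA, mul_pos hA hA]
  · exfalso
    have hr := claim (1/‖c‖) (by positivity)
    have e5 : (1/‖c‖*‖a‖+‖c‖)^2 = (1/‖c‖)^2*‖a‖^2 + 2*‖a‖ + ‖c‖^2 := by
      field_simp [hcA]; ring
    rw [e5, ← heq] at hr
    have : ‖a‖ = 1 := by nlinarith
    nlinarith [sq_nonneg ‖b‖]

private lemma contraction_iff_scalar (a b c : ℂ) :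
    (∀ x : EuclideanSpace ℂ (Fin 2),
        ‖Matrix.toEuclideanCLM (𝕜 := ℂ) !![a, c; 0, b] x‖ ≤ ‖x‖) ↔
      (∀ x y : ℂ, ‖a*x + c*y‖^2 + ‖b*y‖^2 ≤ ‖x‖^2 + ‖y‖^2) := by
  constructor
  · intro h x y
    have hx := h ((WithLp.equiv 2 _).symm ![x, y])
    rw [matrix_apply] at hx
    have h2 : ‖(WithLp.equiv 2 _).symm ![a*x+c*y, b*y]‖^2 ≤
        ‖((WithLp.equiv 2 _).symm ![x, y] : EuclideanSpace ℂ (Fin 2))‖^2 :=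
      pow_le_pow_left₀ (norm_nonneg _) hx 2
    rw [euclid_normsq, euclid_normsq] at h2
    simpa using h2
  · intro h x
    have hx : x = (WithLp.equiv 2 _).symm ![x 0, x 1] := by
      ext i; fin_cases i <;> rfl
    have key : ‖Matrix.toEuclideanCLM (𝕜 := ℂ) !![a, c; 0, b] x‖^2 ≤ ‖x‖^2 := by
      conv_lhs => rw [hx]
      rw [matrix_apply, euclid_normsq, euclid_normsq]
      simpa using h (x 0) (x 1)
    have := Real.sqrt_le_sqrt key
    rwa [Real.sqrt_sq (norm_nonneg _), Real.sqrt_sq (norm_nonneg _)] at this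

/-- The 2×2 matrix `Q = !![a, c; 0, b]` is a contraction on `ℂ²` if and only if
`|a|² + |c|² ≤ 1`, `|b|² + |c|² ≤ 1`, and `c = γ (1-|a|²)^{1/2} (1-|b|²)^{1/2}`
for some `γ` in the closed unit disc. -/
theorem stmt_0 (a b c : ℂ) :
    (∀ x : EuclideanSpace ℂ (Fin 2),
        ‖Matrix.toEuclideanCLM (𝕜 := ℂ) !![a, c; 0, b] x‖ ≤ ‖x‖) ↔
      (‖a‖ ^ 2 + ‖c‖ ^ 2 ≤ 1 ∧ ‖b‖ ^ 2 + ‖c‖ ^ 2 ≤ 1 ∧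
        ∃ γ : ℂ, ‖γ‖ ≤ 1 ∧
          c = γ * Real.sqrt (1 - ‖a‖ ^ 2) * Real.sqrt (1 - ‖b‖ ^ 2)) := by
  rw [contraction_iff_scalar]
  constructor
  · intro h
    obtain ⟨ha, hb, hk⟩ := scalar_fwd a b c h
    have hb1 : ‖b‖^2 ≤ 1 := by nlinarith [sq_nonneg ‖c‖]
    refine ⟨by nlinarith, hb, ?_⟩
    set s₁ := Real.sqrt (1 - ‖a‖^2) with hs₁
    set s₂ := Real.sqrt (1 - ‖b‖^2) with hs₂
    have hsq : (s₁*s₂)^2 = (1-‖a‖^2)*(1-‖b‖^2) := by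
      rw [mul_pow, hs₁, hs₂, Real.sq_sqrt (by linarith), Real.sq_sqrt (by linarith)]
    rcases eq_or_ne c 0 with hc | hc
    · exact ⟨0, by norm_num, by rw [hc]; simp⟩
    · have hc0 : (0:ℝ) < ‖c‖ := norm_pos_iff.mpr hc
      have hs0 : 0 < s₁*s₂ := by
        rcases (mul_nonneg (Real.sqrt_nonneg _) (Real.sqrt_nonneg _) : (0:ℝ) ≤ s₁*s₂).lt_or_eq with h' | h'
        · exact h'
        · exfalso; rw [← h'] at hsq; nlinarith
      refine ⟨c / ((s₁*s₂ : ℝ) : ℂ), ?_, ?_⟩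
      · rw [norm_div, Complex.norm_real, Real.norm_of_nonneg hs0.le,
          div_le_one hs0]
        have : ‖c‖^2 ≤ (s₁*s₂)^2 := by rw [hsq]; exact hk
        nlinarith
      · have hs1 : s₁ ≠ 0 := by intro hz; rw [hz] at hs0; simp at hs0
        have hs2 : s₂ ≠ 0 := by intro hz; rw [hz] at hs0; simp at hs0
        have h₁ : ((s₁:ℝ) : ℂ) ≠ 0 := Complex.ofReal_ne_zero.mpr hs1
        have h₂ : ((s₂:ℝ) : ℂ) ≠ 0 := Complex.ofReal_ne_zero.mpr hs2
        push_cast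
        field_simp [h₁, h₂]
  · rintro ⟨h1, h2, γ, hγ, hc⟩
    have ha : ‖a‖^2 ≤ 1 := by nlinarith [sq_nonneg ‖c‖]
    have hb1 : ‖b‖^2 ≤ 1 := by nlinarith [sq_nonneg ‖c‖]
    have hb' : ‖b‖^2 + ‖c‖^2 ≤ 1 := h2
    have hk : ‖c‖^2 ≤ (1-‖a‖^2)*(1-‖b‖^2) := by
      have hnc : ‖c‖ = ‖γ‖ * Real.sqrt (1-‖a‖^2) * Real.sqrt (1-‖b‖^2) := by
        rw [hc, norm_mul, norm_mul, Complex.norm_real, Complex.norm_real,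
          Real.norm_of_nonneg (Real.sqrt_nonneg _), Real.norm_of_nonneg (Real.sqrt_nonneg _)]
      have h1s : Real.sqrt (1-‖a‖^2)^2 = 1-‖a‖^2 := Real.sq_sqrt (by linarith)
      have h2s : Real.sqrt (1-‖b‖^2)^2 = 1-‖b‖^2 := Real.sq_sqrt (by linarith)
      have := norm_nonneg γ
      calc ‖c‖^2 = ‖γ‖^2 * (Real.sqrt (1-‖a‖^2)^2 * Real.sqrt (1-‖b‖^2)^2) := by
            rw [hnc]; ring
        _ = ‖γ‖^2 * ((1-‖a‖^2)*(1-‖b‖^2)) := by rw [h1s, h2s]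
        _ ≤ 1 * ((1-‖a‖^2)*(1-‖b‖^2)) := by
            apply mul_le_mul_of_nonneg_right (by nlinarith)
            apply mul_nonneg <;> linarith
        _ = (1-‖a‖^2)*(1-‖b‖^2) := one_mul _
    intro x y
    exact scalar_bwd a b c x y ha hb' hk
end

section
/- Let T be a contraction on H = H₁ ⊕ H₀ ⊕ H₋₁, block upper triangular with diagonal entries S (isometry), N (nilpotent of order n), C (co-isometry). Then D_{T*} T^{*k} D_T = 0 for all k ≥ n, and consequently the characteristic function Θ_T(z) = (-T + Σ_{k=1}^{n} z^k D_{T*} T^{*(k-1)} D_T)|_{𝒟_T} is a polynomial in z of degree at most n. -/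
open ContinuousLinearMap

local notation "⟪" x ", " y "⟫" => @inner ℂ _ _ x y

/-- If `A` is norm-preserving at `y` and `D ∘ D = 1 - A* A` with `D` positive,
then `D y = 0`. -/
lemma defect_zero_of_norm_eq {H : Type*} [NormedAddCommGroup H] [InnerProductSpace ℂ H]
    [CompleteSpace H] (A D : H →L[ℂ] H) (hD : D.IsPositive)
    (hsq : D ∘L D = 1 - adjoint A ∘L A) (y : H) (hy : ‖A y‖ = ‖y‖) : D y = 0 := by
  have hself : IsSelfAdjoint D := hD.isSelfAdjoint
  have h1 : ⟪D y, D y⟫ = ⟪y, (D ∘L D) y⟫ := by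
    rw [comp_apply]
    calc ⟪D y, D y⟫ = ⟪adjoint D y, D y⟫ := by rw [hself.adjoint_eq]
      _ = ⟪y, D (D y)⟫ := adjoint_inner_left D (D y) y
  have h2 : ⟪y, (D ∘L D) y⟫ = 0 := by
    rw [hsq]
    have hA : ⟪y, (adjoint A ∘L A) y⟫ = ⟪A y, A y⟫ := by
      rw [comp_apply, adjoint_inner_right]
    simp only [sub_apply, inner_sub_right, ContinuousLinearMap.one_apply, hA,
      inner_self_eq_norm_sq_to_K, hy]
    ring
  rw [h2] at h1
  exact inner_self_eq_zero.mp h1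

set_option maxHeartbeats 1000000 in
/-- For an upper triangular contraction with isometry `S`, nilpotent `N` of order `n` and
co-isometry `C` on the diagonal, `D_{T*} T^{*k} D_T = 0` for all `k ≥ n`, and consequently
the characteristic function `Θ_T(z) = (-T + z D_{T*}(I - zT*)⁻¹ D_T)|_{𝒟_T}` equals the
polynomial `-T + ∑_{k=1}^{n} z^k D_{T*} T^{*(k-1)} D_T` on `𝒟_T`. -/
theorem stmt_4
    {H : Type*} [NormedAddCommGroup H] [InnerProductSpace ℂ H] [CompleteSpace H]
    (H1 H0 Hm1 : Submodule ℂ H)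
    [CompleteSpace H1] [CompleteSpace H0] [CompleteSpace Hm1]
    (horth10 : H1 ⟂ H0) (horth1m : H1 ⟂ Hm1) (horth0m : H0 ⟂ Hm1)
    (hspan : H1 ⊔ H0 ⊔ Hm1 = ⊤)
    (T : H →L[ℂ] H) (hT : ‖T‖ ≤ 1)
    (hinv1 : ∀ x ∈ H1, T x ∈ H1)
    (hinv10 : ∀ x ∈ H1 ⊔ H0, T x ∈ H1 ⊔ H0)
    (hiso : ∀ x ∈ H1, ‖T x‖ = ‖x‖)
    (n : ℕ)
    (hN : (H0.orthogonalProjection ∘L T ∘L H0.subtypeL) ^ n = 0)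
    (hC : (Hm1.orthogonalProjection ∘L T ∘L Hm1.subtypeL) ∘L
        adjoint (Hm1.orthogonalProjection ∘L T ∘L Hm1.subtypeL) = 1)
    (DT DTs : H →L[ℂ] H) (hDTpos : DT.IsPositive) (hDTspos : DTs.IsPositive)
    (hDTsq : DT ∘L DT = 1 - adjoint T ∘L T)
    (hDTssq : DTs ∘L DTs = 1 - T ∘L adjoint T) :
    (∀ k : ℕ, n ≤ k → DTs ∘L ((adjoint T) ^ k) ∘L DT = 0) ∧
      (∀ z : ℂ, ‖z‖ < 1 → ∀ x : H,
        -(T (DT x)) + z • DTs (Ring.inverse (1 - z • adjoint T) (DT (DT x))) =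
          -(T (DT x)) +
            ∑ k ∈ Finset.Icc 1 n, z ^ k • DTs (((adjoint T) ^ (k - 1)) (DT (DT x)))) := by
  -- Hm1 sits inside the orthogonal complement of H1 ⊔ H0
  have horthm : Hm1 ≤ (H1 ⊔ H0)ᗮ := by
    rw [← Submodule.isOrtho_iff_le]
    exact (Submodule.isOrtho_sup_left.mpr ⟨horth1m, horth0m⟩).symm
  -- and conversely
  have hm1_eq : ∀ u : H, u ∈ (H1 ⊔ H0)ᗮ → u ∈ Hm1 := by
    intro u hu
    have hmem : u ∈ H1 ⊔ H0 ⊔ Hm1 := hspan ▸ Submodule.mem_top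
    obtain ⟨v, hv, c, hc, rfl⟩ := Submodule.mem_sup.mp hmem
    have hvc : ⟪v, c⟫ = 0 := Submodule.inner_right_of_mem_orthogonal hv (horthm hc)
    have hvu : ⟪v, v + c⟫ = 0 := (Submodule.mem_orthogonal _ _).mp hu v hv
    rw [inner_add_right, hvc, add_zero, inner_self_eq_zero] at hvu
    simpa [hvu] using hc
  -- decomposition of H1ᗮ as H0 + Hm1
  have h1perp_decomp : ∀ u : H, u ∈ H1ᗮ → ∃ b ∈ H0, ∃ c ∈ Hm1, u = b + c := by
    intro u hu
    have hmem : u ∈ H1 ⊔ (H0 ⊔ Hm1) := by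
      rw [← sup_assoc, hspan]; exact Submodule.mem_top
    obtain ⟨a, ha, w, hw, rfl⟩ := Submodule.mem_sup.mp hmem
    obtain ⟨b, hb, c, hc, rfl⟩ := Submodule.mem_sup.mp hw
    have hab : ⟪a, b⟫ = 0 := Submodule.inner_right_of_mem_orthogonal ha
      ((Submodule.isOrtho_iff_le.mp horth10.symm) hb)
    have hac : ⟪a, c⟫ = 0 := Submodule.inner_right_of_mem_orthogonal ha
      ((Submodule.isOrtho_iff_le.mp horth1m.symm) hc)
    have hau : ⟪a, a + (b + c)⟫ = 0 := (Submodule.mem_orthogonal _ _).mp hu a ha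
    rw [inner_add_right, inner_add_right, hab, hac, add_zero, add_zero,
      inner_self_eq_zero] at hau
    exact ⟨b, hb, c, hc, by simp [hau]⟩
  -- adjoint T preserves H1ᗮ
  have hTs1 : ∀ u ∈ H1ᗮ, adjoint T u ∈ H1ᗮ := by
    intro u hu
    rw [Submodule.mem_orthogonal]
    intro w hw
    rw [adjoint_inner_right]
    exact (Submodule.mem_orthogonal _ _).mp hu (T w) (hinv1 w hw)
  -- adjoint T preserves Hm1
  have hTsm : ∀ u ∈ Hm1, adjoint T u ∈ Hm1 := by
    intro u hu
    apply hm1_eq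
    rw [Submodule.mem_orthogonal]
    intro w hw
    rw [adjoint_inner_right]
    exact (Submodule.mem_orthogonal _ _).mp (horthm hu) (T w) (hinv10 w hw)
  -- adjoint T is isometric on Hm1
  have hTsm_iso : ∀ u, ∀ hu : u ∈ Hm1, ‖adjoint T u‖ = ‖u‖ := by
    intro u hu
    set C : Hm1 →L[ℂ] Hm1 := Hm1.orthogonalProjection ∘L T ∘L Hm1.subtypeL with hCdef
    set uu : Hm1 := ⟨u, hu⟩ with huudef
    have hadj : adjoint C = (Hm1.orthogonalProjection : H →L[ℂ] Hm1) ∘L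
        adjoint T ∘L Hm1.subtypeL := by
      rw [hCdef, adjoint_comp, adjoint_comp, Hm1.adjoint_subtypeL,
        Hm1.adjoint_orthogonalProjectionOnto]
      rfl
    have hCs : ((adjoint C uu : Hm1) : H) = adjoint T u := by
      rw [hadj]
      simp only [comp_apply, Submodule.subtypeL_apply]
      exact Submodule.starProjection_eq_self_iff.mpr (hTsm u hu)
    have hinner : ⟪adjoint C uu, adjoint C uu⟫ = ⟪uu, uu⟫ := by
      rw [adjoint_inner_left]
      have : C (adjoint C uu) = uu := by
        rw [← comp_apply, hC, ContinuousLinearMap.one_apply]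
      rw [this]
    have hnorm : ‖adjoint C uu‖ = ‖uu‖ := by
      rw [inner_self_eq_norm_sq_to_K, inner_self_eq_norm_sq_to_K] at hinner
      have h2 : ‖adjoint C uu‖ ^ 2 = ‖uu‖ ^ 2 := by exact_mod_cast hinner
      calc ‖adjoint C uu‖ = Real.sqrt (‖adjoint C uu‖ ^ 2) :=
            (Real.sqrt_sq (norm_nonneg _)).symm
        _ = Real.sqrt (‖uu‖ ^ 2) := by rw [h2]
        _ = ‖uu‖ := Real.sqrt_sq (norm_nonneg _)
    calc ‖adjoint T u‖ = ‖((adjoint C uu : Hm1) : H)‖ := by rw [hCs]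
      _ = ‖adjoint C uu‖ := rfl
      _ = ‖uu‖ := hnorm
      _ = ‖u‖ := rfl
  -- DTs vanishes on Hm1
  have hDTs_zero : ∀ u ∈ Hm1, DTs u = 0 := by
    intro u hu
    refine defect_zero_of_norm_eq (adjoint T) DTs hDTspos ?_ u (hTsm_iso u hu)
    rw [adjoint_adjoint]
    exact hDTssq
  -- DT vanishes on H1
  have hDT_zero : ∀ u ∈ H1, DT u = 0 := fun u hu =>
    defect_zero_of_norm_eq T DT hDTpos hDTsq u (hiso u hu)
  -- DT maps into H1ᗮ
  have hDT_range : ∀ v : H, DT v ∈ H1ᗮ := by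
    intro v
    rw [Submodule.mem_orthogonal]
    intro w hw
    have hself : IsSelfAdjoint DT := hDTpos.isSelfAdjoint
    calc ⟪w, DT v⟫ = ⟪adjoint DT w, v⟫ := by rw [adjoint_inner_left]
      _ = ⟪DT w, v⟫ := by rw [hself.adjoint_eq]
      _ = 0 := by rw [hDT_zero w hw, inner_zero_left]
  -- the nilpotent compression
  set N : H0 →L[ℂ] H0 := H0.orthogonalProjection ∘L T ∘L H0.subtypeL with hNdef
  have hNs_n : (adjoint N) ^ n = 0 := by
    rw [← star_eq_adjoint, ← star_pow, hN, star_zero]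
  -- key step : P0 (T* u) = N* (P0 u) for u ∈ H1ᗮ
  have hstep : ∀ u ∈ H1ᗮ, H0.orthogonalProjection (adjoint T u) =
      adjoint N (H0.orthogonalProjection u) := by
    intro u hu
    obtain ⟨b, hb, c, hc, rfl⟩ := h1perp_decomp u hu
    have hcperp : c ∈ H0ᗮ := (Submodule.isOrtho_iff_le.mp horth0m.symm) hc
    have hTscperp : adjoint T c ∈ H0ᗮ :=
      (Submodule.isOrtho_iff_le.mp horth0m.symm) (hTsm c hc)
    have hPc : H0.orthogonalProjection c = 0 :=
      Submodule.orthogonalProjectionOnto_apply_of_mem_orthogonal hcperp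
    have hPTc : H0.orthogonalProjection (adjoint T c) = 0 :=
      Submodule.orthogonalProjectionOnto_apply_of_mem_orthogonal hTscperp
    set bb : H0 := ⟨b, hb⟩ with hbbdef
    have hPb : H0.orthogonalProjection b = bb := by
      ext
      exact Submodule.starProjection_eq_self_iff.mpr hb
    have hmain : H0.orthogonalProjection (adjoint T b) = adjoint N bb := by
      apply ext_inner_right ℂ
      intro w
      calc ⟪H0.orthogonalProjection (adjoint T b), w⟫
          = ⟪adjoint T b, (w : H)⟫ :=
            Submodule.inner_orthogonalProjectionOnto_eq_of_mem_right (K := H0) w (adjoint T b)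
        _ = ⟪b, T (w : H)⟫ := adjoint_inner_left T (w : H) b
        _ = ⟪bb, H0.orthogonalProjection (T (w : H))⟫ :=
            (Submodule.inner_orthogonalProjectionOnto_eq_of_mem_left (K := H0) bb (T (w : H))).symm
        _ = ⟪bb, N w⟫ := rfl
        _ = ⟪adjoint N bb, w⟫ := (adjoint_inner_left N w bb).symm
    rw [map_add (adjoint T) b c,
      map_add (H0.orthogonalProjection) (adjoint T b) (adjoint T c),
      map_add (H0.orthogonalProjection) b c,
      hPc, hPTc, hPb, add_zero, add_zero, hmain]
  -- iterated key step
  have hiter : ∀ k : ℕ, ∀ u ∈ H1ᗮ, ((adjoint T) ^ k) u ∈ H1ᗮ ∧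
      H0.orthogonalProjection (((adjoint T) ^ k) u) =
        ((adjoint N) ^ k) (H0.orthogonalProjection u) := by
    intro k
    induction k with
    | zero => intro u hu; simp [hu]
    | succ k ih =>
      intro u hu
      have h1 : ((adjoint T) ^ (k + 1)) u = ((adjoint T) ^ k) (adjoint T u) := by
        rw [pow_succ, ContinuousLinearMap.mul_apply]
      obtain ⟨hmem, hproj⟩ := ih (adjoint T u) (hTs1 u hu)
      refine ⟨by rw [h1]; exact hmem, ?_⟩
      rw [h1, hproj, hstep u hu, ← ContinuousLinearMap.mul_apply, ← pow_succ]
  -- for k ≥ n, (T*)^k maps H1ᗮ into Hm1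
  have hhigh : ∀ k : ℕ, n ≤ k → ∀ u ∈ H1ᗮ, ((adjoint T) ^ k) u ∈ Hm1 := by
    intro k hk u hu
    obtain ⟨hmem, hproj⟩ := hiter k u hu
    have hNk : ((adjoint N) ^ k) = 0 := by
      rw [← Nat.sub_add_cancel hk, pow_add, hNs_n, mul_zero]
    rw [hNk] at hproj
    simp only [zero_apply] at hproj
    apply hm1_eq
    rw [Submodule.mem_orthogonal]
    intro w hw
    obtain ⟨w1, hw1, w0, hw0, rfl⟩ := Submodule.mem_sup.mp hw
    rw [inner_add_left]
    have e1 : ⟪w1, ((adjoint T) ^ k) u⟫ = 0 :=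
      (Submodule.mem_orthogonal _ _).mp hmem w1 hw1
    have e0 : ⟪w0, ((adjoint T) ^ k) u⟫ = 0 := by
      have := Submodule.inner_orthogonalProjectionOnto_eq_of_mem_left (𝕜 := ℂ) (K := H0)
        (⟨w0, hw0⟩ : H0) (((adjoint T) ^ k) u)
      rw [hproj] at this
      simpa using this.symm
    rw [e1, e0, add_zero]
  -- PART 1
  have part1 : ∀ k : ℕ, n ≤ k → DTs ∘L ((adjoint T) ^ k) ∘L DT = 0 := by
    intro k hk
    ext v
    simp only [comp_apply, zero_apply]
    exact hDTs_zero _ (hhigh k hk (DT v) (hDT_range v))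
  refine ⟨part1, ?_⟩
  -- PART 2
  intro z hz x
  set w : H := DT (DT x) with hwdef
  have hw : w ∈ H1ᗮ := hDT_range _
  have hnorm : ‖z • adjoint T‖ < 1 := by
    have hTs : ‖adjoint T‖ = ‖T‖ := LinearIsometryEquiv.norm_map adjoint T
    calc ‖z • adjoint T‖ = ‖z‖ * ‖adjoint T‖ := norm_smul z (adjoint T)
      _ ≤ ‖z‖ * 1 := by
          apply mul_le_mul_of_nonneg_left _ (norm_nonneg z)
          rw [hTs]; exact hT
      _ = ‖z‖ := mul_one _
      _ < 1 := hz
  have h1 : HasSum (fun i : ℕ => (z • adjoint T) ^ i)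
      (Ring.inverse (1 - z • adjoint T)) := hasSum_geom_series_inverse _ hnorm
  have h2 : HasSum (fun i : ℕ => ((z • adjoint T) ^ i) w)
      (Ring.inverse (1 - z • adjoint T) w) := by
    have := (ContinuousLinearMap.apply ℂ H w).hasSum h1
    simpa [ContinuousLinearMap.apply_apply] using this
  have h3 : HasSum (fun i : ℕ => z • DTs (((z • adjoint T) ^ i) w))
      (z • DTs (Ring.inverse (1 - z • adjoint T) w)) := by
    have := (z • DTs).hasSum h2
    simpa [ContinuousLinearMap.smul_apply] using this
  have hvanish : ∀ i : ℕ, i ∉ Finset.range n →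
      z • DTs (((z • adjoint T) ^ i) w) = 0 := by
    intro i hi
    rw [Finset.mem_range, not_lt] at hi
    have : DTs (((adjoint T) ^ i) w) = 0 := hDTs_zero _ (hhigh i hi w hw)
    rw [smul_pow]
    rw [ContinuousLinearMap.smul_apply, map_smul, this, smul_zero, smul_zero]
  have h4 : HasSum (fun i : ℕ => z • DTs (((z • adjoint T) ^ i) w))
      (∑ i ∈ Finset.range n, z • DTs (((z • adjoint T) ^ i) w)) :=
    hasSum_sum_of_ne_finset_zero hvanish
  have heq : z • DTs (Ring.inverse (1 - z • adjoint T) w) =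
      ∑ i ∈ Finset.range n, z • DTs (((z • adjoint T) ^ i) w) := h3.unique h4
  rw [heq]
  congr 1
  -- reindex the finite sum
  rw [← Finset.Ico_add_one_right_eq_Icc, Finset.sum_Ico_eq_sum_range]
  apply Finset.sum_congr rfl
  intro i _
  rw [smul_pow]
  simp only [ContinuousLinearMap.smul_apply, map_smul, smul_smul,
    Nat.add_sub_cancel_left]
  congr 1
  rw [← pow_succ', Nat.add_comm]
end

section
/- Let T be a contraction on a Hilbert space H such that D_{T*} T^{*k} D_T = 0 for all k ≥ n. Then the closed subspace H₁ = closed span of {T^k h : h ∈ 𝒟_{T*}, k ≥ n} is invariant under T, and T restricted to H₁ is an isometry. -/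
open ContinuousLinearMap

/-- If a contraction `T` satisfies `D_{T*} T^{*k} D_T = 0` for all `k ≥ n`, then the closed
span `H₁` of `{T^k h : h ∈ 𝒟_{T*}, k ≥ n}` is `T`-invariant and `T|_{H₁}` is an isometry. -/
theorem stmt_5
    {H : Type*} [NormedAddCommGroup H] [InnerProductSpace ℂ H] [CompleteSpace H]
    (T : H →L[ℂ] H) (hT : ‖T‖ ≤ 1) (n : ℕ)
    (DT DTs : H →L[ℂ] H) (hDTpos : DT.IsPositive) (hDTspos : DTs.IsPositive)
    (hDTsq : DT ∘L DT = 1 - adjoint T ∘L T)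
    (hDTssq : DTs ∘L DTs = 1 - T ∘L adjoint T)
    (hvanish : ∀ k : ℕ, n ≤ k → DTs ∘L ((adjoint T) ^ k) ∘L DT = 0) :
    (∀ x ∈ (Submodule.span ℂ {x : H | ∃ (k : ℕ) (h : H), n ≤ k ∧
        h ∈ closure (Set.range DTs) ∧ x = (T ^ k) h}).topologicalClosure,
      T x ∈ (Submodule.span ℂ {x : H | ∃ (k : ℕ) (h : H), n ≤ k ∧
        h ∈ closure (Set.range DTs) ∧ x = (T ^ k) h}).topologicalClosure) ∧
    (∀ x ∈ (Submodule.span ℂ {x : H | ∃ (k : ℕ) (h : H), n ≤ k ∧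
        h ∈ closure (Set.range DTs) ∧ x = (T ^ k) h}).topologicalClosure,
      ‖T x‖ = ‖x‖) := by
  set s : Set H := {x : H | ∃ (k : ℕ) (h : H), n ≤ k ∧
      h ∈ closure (Set.range DTs) ∧ x = (T ^ k) h} with hs
  set S : Submodule ℂ H := Submodule.span ℂ s with hS
  -- adjoint of the vanishing hypothesis
  have hadj : ∀ k : ℕ, n ≤ k → DT ∘L (T ^ k) ∘L DTs = 0 := by
    intro k hk
    have hpow : adjoint ((adjoint T) ^ k) = T ^ k := by
      rw [← ContinuousLinearMap.star_eq_adjoint, ← ContinuousLinearMap.star_eq_adjoint,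
        star_pow, star_star]
    have := congrArg ContinuousLinearMap.adjoint (hvanish k hk)
    simpa [ContinuousLinearMap.adjoint_comp, hDTpos.isSelfAdjoint.adjoint_eq, hDTspos.isSelfAdjoint.adjoint_eq,
      hpow, ← ContinuousLinearMap.comp_assoc] using this
  -- DT kills every generator
  have hgen : ∀ x ∈ s, DT x = 0 := by
    rintro x ⟨k, h, hk, hh, rfl⟩
    have hcont : Continuous fun y => (DT ∘L (T ^ k)) y := (DT ∘L (T ^ k)).continuous
    have hclosed : IsClosed {y : H | (DT ∘L (T ^ k)) y = 0} :=
      isClosed_eq hcont continuous_const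
    have hsub : Set.range DTs ⊆ {y : H | (DT ∘L (T ^ k)) y = 0} := by
      rintro _ ⟨g, rfl⟩
      have := congrFun (congrArg DFunLike.coe (hadj k hk)) g
      simpa using this
    have : h ∈ {y : H | (DT ∘L (T ^ k)) y = 0} :=
      closure_minimal hsub hclosed hh
    simpa using this
  -- DT kills all of the closure of the span
  have hker : ∀ x ∈ S.topologicalClosure, DT x = 0 := by
    have h1 : S ≤ DT.ker := by
      rw [hS, Submodule.span_le]
      intro x hx
      exact hgen x hx
    have h2 : S.topologicalClosure ≤ DT.ker :=
      Submodule.topologicalClosure_minimal _ h1 (ContinuousLinearMap.isClosed_ker DT)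
    intro x hx
    exact h2 hx
  constructor
  · -- invariance
    intro x hx
    have hmap : ∀ y ∈ s, T y ∈ S := by
      rintro _ ⟨k, h, hk, hh, rfl⟩
      refine Submodule.subset_span ⟨k + 1, h, le_trans hk (Nat.le_succ k), hh, ?_⟩
      rw [pow_succ', ContinuousLinearMap.mul_apply]
    have h1 : S ≤ (S.topologicalClosure).comap (T : H →ₗ[ℂ] H) := by
      rw [hS, Submodule.span_le]
      intro y hy
      exact Submodule.le_topologicalClosure S (hmap y hy)
    have hclosed : IsClosed (((S.topologicalClosure).comap (T : H →ₗ[ℂ] H) : Submodule ℂ H) : Set H) := by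
      have : ((S.topologicalClosure).comap (T : H →ₗ[ℂ] H) : Submodule ℂ H) =
          (S.topologicalClosure).comap (T : H →ₗ[ℂ] H) := rfl
      exact S.isClosed_topologicalClosure.preimage T.continuous
    have h2 := Submodule.topologicalClosure_minimal _ h1 hclosed
    exact h2 hx
  · -- isometry
    intro x hx
    have hx0 : DT x = 0 := hker x hx
    have key : (adjoint T) (T x) = x := by
      have h1 : (DT ∘L DT) x = ((1 : H →L[ℂ] H) - adjoint T ∘L T) x := by rw [hDTsq]
      simp only [ContinuousLinearMap.comp_apply, hx0, map_zero,
        ContinuousLinearMap.sub_apply, ContinuousLinearMap.one_apply] at h1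
      exact (sub_eq_zero.mp h1.symm).symm
    have hinner : (inner ℂ (T x) (T x) : ℂ) = inner ℂ x x := by
      rw [← ContinuousLinearMap.adjoint_inner_right, key]
    rw [inner_self_eq_norm_sq_to_K, inner_self_eq_norm_sq_to_K] at hinner
    have : (‖T x‖ : ℝ) ^ 2 = ‖x‖ ^ 2 := by exact_mod_cast hinner
    nlinarith [norm_nonneg (T x), norm_nonneg x]
end

section
/- Let X be a contraction on a Hilbert space G of class C₀₀ (i.e. both X^k → 0 and X^{*k} → 0 strongly). Then the defect spaces 𝒟_X = closure of range of (I - X*X)^{1/2} and 𝒟_{X*} = closure of range of (I - XX*)^{1/2} have the same Hilbert space dimension. -/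
open ContinuousLinearMap Filter Finset
set_option synthInstance.maxHeartbeats 2000000
set_option maxHeartbeats 2000000
set_option linter.unusedSectionVars false
set_option linter.unusedVariables false

noncomputable section

namespace Stmt8Aux

variable {G : Type*} [NormedAddCommGroup G] [InnerProductSpace ℂ G] [CompleteSpace G]

local notation "⟪" x ", " y "⟫" => @inner ℂ _ _ x y



/-- uniqueness of the positive square root -/
lemma pos_sqrt_unique (T S : G →L[ℂ] G) (hT : T.IsPositive) (hS : S.IsPositive)
    (h : T * T = S * S) : T = S := by
  have h1 : (0:G→L[ℂ]G) ≤ T := (nonneg_iff_isPositive T).mpr hT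
  have h2 : (0:G→L[ℂ]G) ≤ S := (nonneg_iff_isPositive S).mpr hS
  have e1 : CFC.sqrt (S * S) = T := CFC.sqrt_unique h h1
  have e2 : CFC.sqrt (S * S) = S := CFC.sqrt_unique rfl h2
  rw [← e1, e2]

lemma pow_intertwine (Y A B : G →L[ℂ] G) (h : Y * A = B * Y) (n : ℕ) :
    Y * A ^ n = B ^ n * Y := by
  induction n with
  | zero => simp
  | succ n ih =>
    rw [pow_succ, pow_succ, ← mul_assoc, ih, mul_assoc, h, ← mul_assoc]

lemma aeval_intertwine (Y A B : G →L[ℂ] G) (h : Y * A = B * Y) (p : Polynomial ℝ) :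
    Y * Polynomial.aeval A p = Polynomial.aeval B p * Y := by
  induction p using Polynomial.induction_on with
  | C r => simp [Polynomial.aeval_C, Algebra.algebraMap_eq_smul_one]
  | add p q hp hq => simp [mul_add, add_mul, hp, hq]
  | monomial n r _ =>
    simp only [map_mul, Polynomial.aeval_C, Polynomial.aeval_X_pow]
    calc Y * (algebraMap ℝ (G →L[ℂ] G) r * A ^ (n+1))
        = algebraMap ℝ (G →L[ℂ] G) r * (Y * A ^ (n+1)) := by
          rw [Algebra.algebraMap_eq_smul_one]
          simp [mul_assoc, mul_smul_comm, smul_mul_assoc]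
      _ = algebraMap ℝ (G →L[ℂ] G) r * (B ^ (n+1) * Y) := by rw [pow_intertwine Y A B h]
      _ = algebraMap ℝ (G →L[ℂ] G) r * B ^ (n+1) * Y := by rw [mul_assoc]

/-- intertwining passes to continuous functions of selfadjoint operators -/
lemma cfc_intertwine (Y A B : G →L[ℂ] G) (hA : IsSelfAdjoint A) (hB : IsSelfAdjoint B)
    (h : Y * A = B * Y) (f : ℝ → ℝ) (hf : Continuous f) :
    Y * cfc f A = cfc f B * Y := by
  rcases subsingleton_or_nontrivial G with hG | hG
  · have : Subsingleton (G →L[ℂ] G) := ⟨fun a b => ContinuousLinearMap.ext fun x => Subsingleton.elim _ _⟩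
    exact Subsingleton.elim _ _
  by_cases hY : Y = 0
  · simp [hY]
  have hYn : 0 < ‖Y‖ := norm_pos_iff.mpr hY
  rw [← sub_eq_zero, ← norm_eq_zero]
  by_contra hne
  have hpos : 0 < ‖Y * cfc f A - cfc f B * Y‖ := lt_of_le_of_ne (norm_nonneg _) (Ne.symm hne)
  set ε : ℝ := ‖Y * cfc f A - cfc f B * Y‖ / (4 * ‖Y‖) with hε
  have hεpos : 0 < ε := by positivity
  set M : ℝ := max ‖A‖ ‖B‖ with hM
  have hsA : spectrum ℝ A ⊆ Set.Icc (-M) M := by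
    intro x hx
    have := spectrum.norm_le_norm_of_mem hx
    rw [Real.norm_eq_abs, abs_le] at this
    constructor
    · linarith [this.1, le_max_left ‖A‖ ‖B‖]
    · linarith [this.2, le_max_left ‖A‖ ‖B‖]
  have hsB : spectrum ℝ B ⊆ Set.Icc (-M) M := by
    intro x hx
    have := spectrum.norm_le_norm_of_mem hx
    rw [Real.norm_eq_abs, abs_le] at this
    constructor
    · linarith [this.1, le_max_right ‖A‖ ‖B‖]
    · linarith [this.2, le_max_right ‖A‖ ‖B‖]
  obtain ⟨p, hp⟩ := exists_polynomial_near_of_continuousOn (-M) M f hf.continuousOn ε hεpos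
  have hcA : ‖cfc f A - Polynomial.aeval A p‖ ≤ ε := by
    rw [← cfc_polynomial p A hA, ← cfc_sub f (fun x => p.eval x) A
        (hf.continuousOn) (Polynomial.continuousOn _)]
    refine norm_cfc_le hεpos.le fun x hx => ?_
    have := hp x (hsA hx)
    rw [Real.norm_eq_abs]
    rw [abs_sub_comm] at this
    exact this.le
  have hcB : ‖cfc f B - Polynomial.aeval B p‖ ≤ ε := by
    rw [← cfc_polynomial p B hB, ← cfc_sub f (fun x => p.eval x) B
        (hf.continuousOn) (Polynomial.continuousOn _)]
    refine norm_cfc_le hεpos.le fun x hx => ?_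
    have := hp x (hsB hx)
    rw [Real.norm_eq_abs]
    rw [abs_sub_comm] at this
    exact this.le
  have key : Y * cfc f A - cfc f B * Y
      = Y * (cfc f A - Polynomial.aeval A p) - (cfc f B - Polynomial.aeval B p) * Y := by
    rw [mul_sub, sub_mul, aeval_intertwine Y A B h p]
    abel
  have hbound : ‖Y * cfc f A - cfc f B * Y‖ ≤ 2 * ‖Y‖ * ε := by
    rw [key]
    calc ‖Y * (cfc f A - Polynomial.aeval A p) - (cfc f B - Polynomial.aeval B p) * Y‖
        ≤ ‖Y * (cfc f A - Polynomial.aeval A p)‖ + ‖(cfc f B - Polynomial.aeval B p) * Y‖ :=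
          norm_sub_le _ _
      _ ≤ ‖Y‖ * ‖cfc f A - Polynomial.aeval A p‖ + ‖cfc f B - Polynomial.aeval B p‖ * ‖Y‖ :=
          add_le_add (norm_mul_le _ _) (norm_mul_le _ _)
      _ ≤ ‖Y‖ * ε + ε * ‖Y‖ := by
          refine add_le_add (mul_le_mul_of_nonneg_left hcA (norm_nonneg _))
            (mul_le_mul_of_nonneg_right hcB (norm_nonneg _))
      _ = 2 * ‖Y‖ * ε := by ring
  rw [hε] at hbound
  have : 2 * ‖Y‖ * (‖Y * cfc f A - cfc f B * Y‖ / (4 * ‖Y‖)) = ‖Y * cfc f A - cfc f B * Y‖ / 2 := by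
    field_simp
    ring
  rw [this] at hbound
  linarith


lemma eq_sqrt (D A : G →L[ℂ] G) (hD : D.IsPositive) (h : D * D = A) : D = cfc Real.sqrt A := by
  have hA : (0:G→L[ℂ]G) ≤ A := h ▸ (by
    have := star_mul_self_nonneg D
    rwa [(isSelfAdjoint_iff.mp hD.isSelfAdjoint : star D = D)] at this)
  have h1 : (0:G→L[ℂ]G) ≤ cfc Real.sqrt A := cfc_nonneg (fun x _ => Real.sqrt_nonneg x)
  have h2 : cfc Real.sqrt A * cfc Real.sqrt A = A := by
    rw [← cfc_mul Real.sqrt Real.sqrt A Real.continuous_sqrt.continuousOn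
      Real.continuous_sqrt.continuousOn]
    have : ∀ x ∈ spectrum ℝ A, Real.sqrt x * Real.sqrt x = x := fun x hx =>
      Real.mul_self_sqrt (spectrum_nonneg_of_nonneg hA hx)
    rw [cfc_congr this, cfc_id' ℝ A]
  exact pos_sqrt_unique _ _ hD ((nonneg_iff_isPositive _).mp (h1)) (by rw [h2, h])

lemma defect_intertwine (X D Ds : G →L[ℂ] G) (hD : D.IsPositive) (hDs : Ds.IsPositive)
    (hDsq : D ∘L D = 1 - adjoint X ∘L X)
    (hDssq : Ds ∘L Ds = 1 - X ∘L adjoint X) :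
    X ∘L D = Ds ∘L X ∧ adjoint X ∘L Ds = D ∘L adjoint X := by
  set A : G →L[ℂ] G := 1 - adjoint X * X with hA
  set B : G →L[ℂ] G := 1 - X * adjoint X with hB
  have hDA : D * D = A := hDsq
  have hDsB : Ds * Ds = B := hDssq
  have hAsa : IsSelfAdjoint A := by
    rw [hA, isSelfAdjoint_iff]
    simp [star_sub, star_mul, star_eq_adjoint, adjoint_adjoint]
  have hBsa : IsSelfAdjoint B := by
    rw [hB, isSelfAdjoint_iff]
    simp [star_sub, star_mul, star_eq_adjoint, adjoint_adjoint]
  have hXAB : X * A = B * X := by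
    rw [hA, hB]
    simp only [mul_sub, sub_mul, mul_one, one_mul]
    rw [mul_assoc]
  have hYBA : adjoint X * B = A * adjoint X := by
    rw [hA, hB]
    simp only [mul_sub, sub_mul, mul_one, one_mul]
    rw [mul_assoc]
  have hDe : D = cfc Real.sqrt A := eq_sqrt D A hD hDA
  have hDse : Ds = cfc Real.sqrt B := eq_sqrt Ds B hDs hDsB
  constructor
  · show X * D = Ds * X
    rw [hDe, hDse]
    exact cfc_intertwine X A B hAsa hBsa hXAB Real.sqrt Real.continuous_sqrt
  · show adjoint X * Ds = D * adjoint X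
    rw [hDe, hDse]
    exact cfc_intertwine (adjoint X) B A hBsa hAsa hYBA Real.sqrt Real.continuous_sqrt

section core
variable (X D Ds : G →L[ℂ] G) (K : ℕ)

/-- components of the wandering vectors -/
noncomputable def cc (k : ℕ) (x : G) (m : ℕ) : G :=
  if m = 0 then (X ^ k) (Ds x)
  else if m ≤ k then D ((X ^ (k - m)) (Ds x))
  else if m = k + 1 then -(adjoint X x) else 0

lemma pow_shift (T : G →L[ℂ] G) (n : ℕ) (u : G) : T ((T ^ n) u) = (T ^ (n+1)) u := by
  rw [pow_succ']
  rfl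

lemma cc_zero (k : ℕ) (x : G) : cc X D Ds k x 0 = (X ^ k) (Ds x) := by simp [cc]

lemma cc_mid (k i : ℕ) (h : i < k) (x : G) :
    cc X D Ds k x (i + 1) = D ((X ^ (k - 1 - i)) (Ds x)) := by
  have h1 : i + 1 ≤ k := h
  have h2 : k - (i+1) = k - 1 - i := by omega
  simp [cc, h1, h2]

lemma cc_last (k : ℕ) (x : G) : cc X D Ds k x (k + 1) = -(adjoint X x) := by
  simp [cc]

lemma cc_big (k m : ℕ) (h : k + 1 < m) (x : G) : cc X D Ds k x m = 0 := by
  have h1 : ¬ (m = 0) := by omega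
  have h2 : ¬ (m ≤ k) := by omega
  have h3 : ¬ (m = k + 1) := by omega
  simp [cc, h1, h2, h3]

/-- the wandering vectors inside `PiLp` -/
noncomputable def vv (k : ℕ) (x : G) : PiLp 2 (fun _ : Fin (K + 2) => G) :=
  WithLp.toLp 2 (fun m : Fin (K + 2) => cc X D Ds k x m.val)

lemma inner_vv (hD : ∀ u v : G, ⟪D u, D v⟫ = ⟪u, v⟫ - ⟪X u, X v⟫)
    (hDs : ∀ u v : G, ⟪Ds u, Ds v⟫ = ⟪u, v⟫ - ⟪adjoint X u, adjoint X v⟫)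
    (hDsa : ∀ u v : G, ⟪Ds u, v⟫ = ⟪u, Ds v⟫)
    (hintw : ∀ u : G, X (D u) = Ds (X u))
    (k l : ℕ) (hk : k ≤ K) (hl : l ≤ K) (hlk : l ≤ k) (x y : G) :
    ⟪vv X D Ds K k x, vv X D Ds K l y⟫ = if k = l then ⟪x, y⟫ else 0 := by
  have hsum : ⟪vv X D Ds K k x, vv X D Ds K l y⟫
      = ∑ m ∈ range (K + 2), ⟪cc X D Ds k x m, cc X D Ds l y m⟫ := by
    rw [PiLp.inner_apply]
    exact Fin.sum_univ_eq_sum_range (fun m => ⟪cc X D Ds k x m, cc X D Ds l y m⟫) (K+2)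
  -- restrict to range (l+2)
  have hsub : ∑ m ∈ range (K + 2), ⟪cc X D Ds k x m, cc X D Ds l y m⟫
      = ∑ m ∈ range (l + 2), ⟪cc X D Ds k x m, cc X D Ds l y m⟫ := by
    symm
    apply Finset.sum_subset
    · exact Finset.range_subset_range.mpr (by omega)
    · intro m _ hm
      rw [Finset.mem_range, not_lt] at hm
      rw [cc_big X D Ds l m (by omega), inner_zero_right]
  rw [hsum, hsub, Finset.sum_range_succ, Finset.sum_range_succ']
  -- now : Σ_{i<l} f(i+1) + f 0 + f (l+1)
  have hmid : ∀ i ∈ range l, ⟪cc X D Ds k x (i+1), cc X D Ds l y (i+1)⟫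
      = (fun j => ⟪(X ^ (k - l + j)) (Ds x), (X ^ j) (Ds y)⟫) (l-1-i)
        - (fun j => ⟪(X ^ (k - l + j)) (Ds x), (X ^ j) (Ds y)⟫) (l-1-i+1) := by
    intro i hi
    rw [Finset.mem_range] at hi
    rw [cc_mid X D Ds k i (by omega), cc_mid X D Ds l i hi, hD]
    have e1 : k - 1 - i = k - l + (l - 1 - i) := by omega
    have e2 : k - i = k - l + (l - 1 - i + 1) := by omega
    have e3 : l - i = l - 1 - i + 1 := by omega
    congr 1
    · rw [e1]
    · have xs : X ((X ^ (k-1-i)) (Ds x)) = (X ^ (k - i)) (Ds x) := by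
        rw [pow_shift X (k-1-i) (Ds x)]
        congr 2
        omega
      have ys : X ((X ^ (l-1-i)) (Ds y)) = (X ^ (l - i)) (Ds y) := by
        rw [pow_shift X (l-1-i) (Ds y)]
        congr 2
        omega
      rw [xs, ys, e2, e3]
  rw [Finset.sum_congr rfl hmid]
  set g : ℕ → ℂ := fun j => ⟪(X ^ (k - l + j)) (Ds x), (X ^ j) (Ds y)⟫ with hg
  have treflect : ∑ i ∈ range l, (g (l-1-i) - g (l-1-i+1)) = ∑ j ∈ range l, (g j - g (j+1)) :=
    Finset.sum_range_reflect (fun j => g j - g (j+1)) l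
  rw [treflect, Finset.sum_range_sub' g l]
  have hkl : k - l + l = k := by omega
  have hgl : g l = ⟪cc X D Ds k x 0, cc X D Ds l y 0⟫ := by
    rw [cc_zero, cc_zero, hg]
    simp only []
    rw [hkl]
  rcases Nat.eq_or_lt_of_le hlk with heq | hlt
  · -- k = l
    subst heq
    have hfl : ⟪cc X D Ds l x (l+1), cc X D Ds l y (l+1)⟫ = ⟪adjoint X x, adjoint X y⟫ := by
      rw [cc_last, cc_last, inner_neg_neg]
    have hg0 : g 0 = ⟪Ds x, Ds y⟫ := by
      simp [hg]
    rw [if_pos rfl, hfl, hg0, ← hgl, hDs x y]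
    ring
  · -- l < k
    have hfl : ⟪cc X D Ds k x (l+1), cc X D Ds l y (l+1)⟫ = -(g 0) := by
      rw [cc_last, cc_mid X D Ds k l hlt, inner_neg_right, ContinuousLinearMap.adjoint_inner_right,
        hintw, pow_shift X (k-1-l) (Ds x)]
      have e : k - 1 - l + 1 = k - l := by omega
      rw [e, hDsa]
      simp [hg]
    rw [if_neg (by omega), hfl, ← hgl]
    ring

lemma inner_vv' (hD : ∀ u v : G, ⟪D u, D v⟫ = ⟪u, v⟫ - ⟪X u, X v⟫)
    (hDs : ∀ u v : G, ⟪Ds u, Ds v⟫ = ⟪u, v⟫ - ⟪adjoint X u, adjoint X v⟫)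
    (hDsa : ∀ u v : G, ⟪Ds u, v⟫ = ⟪u, Ds v⟫)
    (hintw : ∀ u : G, X (D u) = Ds (X u))
    (k l : ℕ) (hk : k ≤ K) (hl : l ≤ K) (x y : G) :
    ⟪vv X D Ds K k x, vv X D Ds K l y⟫ = if k = l then ⟪x, y⟫ else 0 := by
  rcases le_total l k with h | h
  · exact inner_vv X D Ds K hD hDs hDsa hintw k l hk hl h x y
  · rw [← inner_conj_symm, inner_vv X D Ds K hD hDs hDsa hintw l k hl hk h y x]
    rcases eq_or_ne k l with rfl | hne
    · rw [if_pos rfl, if_pos rfl, inner_conj_symm]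
    · rw [if_neg (fun hh => hne hh.symm), if_neg hne, map_zero]

/-- slot vectors -/
noncomputable def sing (m : ℕ) (v : G) : PiLp 2 (fun _ : Fin (K + 2) => G) :=
  WithLp.toLp 2 (fun m' : Fin (K + 2) => if m'.val = m then v else 0)

lemma inner_vv_sing (k : ℕ) (x : G) (m : ℕ) (hm : m < K + 2) (v : G) :
    ⟪vv X D Ds K k x, sing K m v⟫ = ⟪cc X D Ds k x m, v⟫ := by
  rw [PiLp.inner_apply]
  have : ∀ m' : Fin (K+2), ⟪vv X D Ds K k x m', sing K m v m'⟫
      = if m' = (⟨m, hm⟩ : Fin (K+2)) then ⟪cc X D Ds k x m, v⟫ else 0 := by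
    intro m'
    by_cases h : m'.val = m
    · have h' : m' = (⟨m, hm⟩ : Fin (K+2)) := Fin.ext h
      rw [if_pos h', sing, show (WithLp.toLp 2 (fun m' : Fin (K + 2) => if m'.val = m then v else 0)).ofLp m' = (if m'.val = m then v else 0) from rfl, if_pos h]
      subst h
      rfl
    · have h' : ¬ (m' = (⟨m, hm⟩ : Fin (K+2))) := fun hh => h (by rw [hh])
      rw [if_neg h', sing, show (WithLp.toLp 2 (fun m' : Fin (K + 2) => if m'.val = m then v else 0)).ofLp m' = (if m'.val = m then v else 0) from rfl, if_neg h, inner_zero_right]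
  rw [Finset.sum_congr rfl (fun m' _ => this m')]
  rw [Finset.sum_ite_eq' Finset.univ (⟨m, hm⟩ : Fin (K+2))
    (fun _ => ⟪cc X D Ds k x m, v⟫)]
  simp

lemma norm_sing (m : ℕ) (hm : m < K + 2) (v : G) : ‖sing K (G := G) m v‖ ^ 2 = ‖v‖ ^ 2 := by
  rw [PiLp.norm_sq_eq_of_L2]
  have : ∀ m' : Fin (K+2), ‖sing K (G := G) m v m'‖ ^ 2
      = if m' = (⟨m, hm⟩ : Fin (K+2)) then ‖v‖ ^ 2 else 0 := by
    intro m'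
    by_cases h : m'.val = m
    · rw [if_pos (Fin.ext h), sing, WithLp.ofLp_toLp, if_pos h]
    · rw [if_neg (fun hh => h (by rw [hh])), sing, WithLp.ofLp_toLp, if_neg h, norm_zero]
      norm_num
  rw [Finset.sum_congr rfl (fun m' _ => this m')]
  rw [Finset.sum_ite_eq' Finset.univ (⟨m, hm⟩ : Fin (K+2)) (fun _ => ‖v‖ ^ 2)]
  simp

lemma norm_vv_sq (hD : ∀ u v : G, ⟪D u, D v⟫ = ⟪u, v⟫ - ⟪X u, X v⟫)
    (hDs : ∀ u v : G, ⟪Ds u, Ds v⟫ = ⟪u, v⟫ - ⟪adjoint X u, adjoint X v⟫)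
    (hDsa : ∀ u v : G, ⟪Ds u, v⟫ = ⟪u, Ds v⟫)
    (hintw : ∀ u : G, X (D u) = Ds (X u))
    (k : ℕ) (hk : k ≤ K) (x : G) :
    ‖vv X D Ds K k x‖ ^ 2 = ‖x‖ ^ 2 := by
  have h1 : ⟪vv X D Ds K k x, vv X D Ds K k x⟫ = ⟪x, x⟫ := by
    rw [inner_vv' X D Ds K hD hDs hDsa hintw k k hk hk x x, if_pos rfl]
  have h2 := inner_self_eq_norm_sq_to_K (𝕜 := ℂ) (vv X D Ds K k x)
  have h3 := inner_self_eq_norm_sq_to_K (𝕜 := ℂ) x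
  rw [h2, h3] at h1
  exact_mod_cast h1

end core

lemma core_count (X D Ds : G →L[ℂ] G)
    (hD : ∀ u v : G, ⟪D u, D v⟫ = ⟪u, v⟫ - ⟪X u, X v⟫)
    (hDs : ∀ u v : G, ⟪Ds u, Ds v⟫ = ⟪u, v⟫ - ⟪adjoint X u, adjoint X v⟫)
    (hDsa : ∀ u v : G, ⟪Ds u, v⟫ = ⟪u, Ds v⟫)
    (hintw : ∀ u : G, X (D u) = Ds (X u))
    (h0 : ∀ h : G, Tendsto (fun k : ℕ => (X ^ k) h) atTop (nhds 0))
    (Es : Submodule ℂ G)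
    (hDE : ∀ u : G, D u ∈ Es)
    (n : ℕ) (e : Fin n → G) (hnorm : ∀ j, ‖e j‖ = 1)
    (hPar : ∀ c ∈ Es, (∑ j, ‖(⟪e j, c⟫ : ℂ)‖ ^ 2) = ‖c‖ ^ 2)
    (N : ℕ) (gg : Fin N → G) (hg : Orthonormal ℂ gg)
    (hgXs : ∀ i, adjoint X (gg i) ∈ Es) :
    N ≤ n := by
  by_contra hcon
  push_neg at hcon
  have hN : 0 < N := lt_of_le_of_lt (Nat.zero_le n) hcon
  set ε : ℝ := 1 / (2 * N) with hε
  have hεpos : 0 < ε := by positivity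
  -- choose K₀
  have hev : ∀ α : Fin N, ∃ a : ℕ, ∀ k ≥ a, ‖(X ^ k) (Ds (gg α))‖ ^ 2 < ε := by
    intro α
    have := (h0 (Ds (gg α))).norm
    rw [norm_zero] at this
    have h2 : Tendsto (fun k : ℕ => ‖(X ^ k) (Ds (gg α))‖ ^ 2) atTop (nhds 0) := by
      have := this.pow 2
      simpa using this
    have := (h2.eventually (eventually_lt_nhds hεpos))
    exact eventually_atTop.mp this
  choose f hf using hev
  set K₀ : ℕ := Finset.univ.sup f with hK₀
  -- the contradiction-producing value of K
  set T : ℕ := 2 * N * (K₀ + 1) + 1 with hT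
  set K : ℕ := K₀ + T with hK
  -- the orthonormal family
  set u : Fin T × Fin N → PiLp 2 (fun _ : Fin (K + 2) => G) :=
    fun p => vv X D Ds K (K₀ + p.1.val) (gg p.2) with hu
  have hkle : ∀ i : Fin T, K₀ + i.val ≤ K := fun i => by
    have := i.isLt
    omega
  have huon : Orthonormal ℂ u := by
    rw [orthonormal_iff_ite]
    intro p q
    rw [hu]
    simp only []
    rw [inner_vv' X D Ds K hD hDs hDsa hintw _ _ (hkle p.1) (hkle q.1)]
    rcases eq_or_ne p q with rfl | hne
    · rw [if_pos rfl, if_pos rfl]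
      have := orthonormal_iff_ite.mp hg p.2 p.2
      rw [this, if_pos rfl]
    · by_cases h1 : p.1 = q.1
      · have h2 : p.2 ≠ q.2 := fun h2 => hne (Prod.ext h1 h2)
        rw [if_pos (by rw [h1]), orthonormal_iff_ite.mp hg p.2 q.2, if_neg h2, if_neg hne]
      · rw [if_neg (fun hh => h1 (by
          have : p.1.val = q.1.val := by omega
          exact Fin.ext this)), if_neg hne]
  -- Bessel bound per slot and basis vector
  have bessel : ∀ i : ℕ, i < K + 1 → ∀ j : Fin n,
      (∑ p : Fin T × Fin N, ‖(⟪u p, sing K (i+1) (e j)⟫ : ℂ)‖ ^ 2) ≤ 1 := by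
    intro i hi j
    have := huon.sum_inner_products_le (sing K (i+1) (e j)) (s := Finset.univ)
    have hns := norm_sing (G := G) K (i+1) (by omega) (e j)
    rw [hns] at this
    rw [hnorm j] at this
    simpa using this
  -- rewrite the Bessel inner products
  have hbi : ∀ p : Fin T × Fin N, ∀ i : ℕ, (hi : i < K + 1) → ∀ j : Fin n,
      (⟪u p, sing K (i+1) (e j)⟫ : ℂ) = ⟪cc X D Ds (K₀ + p.1.val) (gg p.2) (i+1), e j⟫ := by
    intro p i hi j
    rw [hu]
    simp only []
    rw [inner_vv_sing X D Ds K _ _ (i+1) (by omega)]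
  -- membership of slots in Es
  have hmem : ∀ p : Fin T × Fin N, ∀ i : ℕ,
      cc X D Ds (K₀ + p.1.val) (gg p.2) (i+1) ∈ Es := by
    intro p i
    set k := K₀ + p.1.val
    by_cases h1 : i < k
    · rw [cc_mid X D Ds k i h1]
      exact hDE _
    · by_cases h2 : i + 1 = k + 1
      · rw [show i + 1 = k + 1 from h2, cc_last]
        exact neg_mem (hgXs p.2)
      · rw [cc_big X D Ds k (i+1) (by omega)]
        exact zero_mem _
  -- slot sums via Parseval
  have hslot : ∀ i : ℕ, (hi : i < K + 1) →
      (∑ p : Fin T × Fin N, ‖cc X D Ds (K₀ + p.1.val) (gg p.2) (i+1)‖ ^ 2) ≤ n := by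
    intro i hi
    have : ∀ p : Fin T × Fin N, ‖cc X D Ds (K₀ + p.1.val) (gg p.2) (i+1)‖ ^ 2
        = ∑ j : Fin n, ‖(⟪e j, cc X D Ds (K₀ + p.1.val) (gg p.2) (i+1)⟫ : ℂ)‖ ^ 2 :=
      fun p => (hPar _ (hmem p i)).symm
    rw [Finset.sum_congr rfl (fun p _ => this p)]
    rw [Finset.sum_comm]
    have : ∀ j : Fin n,
        (∑ p : Fin T × Fin N, ‖(⟪e j, cc X D Ds (K₀ + p.1.val) (gg p.2) (i+1)⟫ : ℂ)‖ ^ 2) ≤ 1 := by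
      intro j
      have hb := bessel i hi j
      have : ∀ p : Fin T × Fin N,
          ‖(⟪e j, cc X D Ds (K₀ + p.1.val) (gg p.2) (i+1)⟫ : ℂ)‖ ^ 2
          = ‖(⟪u p, sing K (i+1) (e j)⟫ : ℂ)‖ ^ 2 := by
        intro p
        rw [hbi p i hi j, ← norm_inner_symm]
      rw [Finset.sum_congr rfl (fun p _ => this p)]
      exact hb
    calc (∑ j : Fin n, ∑ p : Fin T × Fin N,
          ‖(⟪e j, cc X D Ds (K₀ + p.1.val) (gg p.2) (i+1)⟫ : ℂ)‖ ^ 2)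
        ≤ ∑ j : Fin n, (1:ℝ) := Finset.sum_le_sum (fun j _ => this j)
      _ = n := by simp
  -- lower bound per p
  have hlow : ∀ p : Fin T × Fin N,
      (1 : ℝ) - ε ≤ ∑ i ∈ Finset.range (K+1), ‖cc X D Ds (K₀ + p.1.val) (gg p.2) (i+1)‖ ^ 2 := by
    intro p
    set k := K₀ + p.1.val with hk2
    have hfull : (∑ m ∈ Finset.range (K+2), ‖cc X D Ds k (gg p.2) m‖ ^ 2) = 1 := by
      have h1 := norm_vv_sq X D Ds K hD hDs hDsa hintw k (hkle p.1) (gg p.2)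
      have h2 : ‖vv X D Ds K k (gg p.2)‖ ^ 2
          = ∑ m ∈ Finset.range (K+2), ‖cc X D Ds k (gg p.2) m‖ ^ 2 := by
        rw [PiLp.norm_sq_eq_of_L2]
        exact Fin.sum_univ_eq_sum_range (fun m => ‖cc X D Ds k (gg p.2) m‖ ^ 2) (K+2)
      rw [h2] at h1
      rw [h1, hg.1 p.2]
      norm_num
    have hpeel : (∑ m ∈ Finset.range (K+2), ‖cc X D Ds k (gg p.2) m‖ ^ 2)
        = (∑ i ∈ Finset.range (K+1), ‖cc X D Ds k (gg p.2) (i+1)‖ ^ 2)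
          + ‖cc X D Ds k (gg p.2) 0‖ ^ 2 :=
      Finset.sum_range_succ' (fun m => ‖cc X D Ds k (gg p.2) m‖ ^ 2) (K+1)
    have hzero : ‖cc X D Ds k (gg p.2) 0‖ ^ 2 < ε := by
      rw [cc_zero]
      exact hf p.2 k (le_trans (Finset.le_sup (Finset.mem_univ p.2)) (by omega))
    have := hfull
    rw [hpeel] at this
    linarith
  -- combine
  have hcomb : (T : ℝ) * N * (1 - ε) ≤ (K + 1) * n := by
    have hsum1 : (T : ℝ) * N * (1 - ε)
        ≤ ∑ p : Fin T × Fin N, ∑ i ∈ Finset.range (K+1),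
            ‖cc X D Ds (K₀ + p.1.val) (gg p.2) (i+1)‖ ^ 2 := by
      have := Finset.sum_le_sum (s := (Finset.univ : Finset (Fin T × Fin N)))
        (fun p _ => hlow p)
      have hcard : ((Finset.univ : Finset (Fin T × Fin N)).card : ℝ) = (T : ℝ) * N := by
        simp [Finset.card_univ]
      rw [Finset.sum_const, nsmul_eq_mul] at this
      calc (T : ℝ) * N * (1 - ε) = ((Finset.univ : Finset (Fin T × Fin N)).card : ℝ) * (1-ε) := by
            rw [hcard]
        _ ≤ _ := this
    have hsum2 : (∑ p : Fin T × Fin N, ∑ i ∈ Finset.range (K+1),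
            ‖cc X D Ds (K₀ + p.1.val) (gg p.2) (i+1)‖ ^ 2) ≤ (K+1) * n := by
      rw [Finset.sum_comm]
      calc (∑ i ∈ Finset.range (K+1), ∑ p : Fin T × Fin N,
            ‖cc X D Ds (K₀ + p.1.val) (gg p.2) (i+1)‖ ^ 2)
          ≤ ∑ i ∈ Finset.range (K+1), (n : ℝ) :=
            Finset.sum_le_sum (fun i hi => hslot i (Finset.mem_range.mp hi))
        _ = (K+1) * n := by
            rw [Finset.sum_const, Finset.card_range, nsmul_eq_mul]
            push_cast
            ring
    linarith
  -- final arithmetic contradiction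
  have hn' : (n : ℝ) ≤ (N : ℝ) - 1 := by
    have : n + 1 ≤ N := hcon
    have := (Nat.cast_le (α := ℝ)).mpr this
    push_cast at this
    linarith
  have hεN : (N : ℝ) * ε = 1/2 := by
    rw [hε]
    field_simp
  have hTK : (K : ℝ) = K₀ + T := by
    rw [hK]
    push_cast
    ring
  have hTval : (T : ℝ) = 2 * N * (K₀ + 1) + 1 := by
    rw [hT]
    push_cast
    ring
  have hNr : (1 : ℝ) ≤ N := by
    exact_mod_cast hN
  nlinarith [hcomb, mul_le_mul_of_nonneg_left hn' (by positivity : (0:ℝ) ≤ (K:ℝ)+1)]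

/-- an orthonormal set in a separable space is countable -/
lemma countable_of_orthonormal {E : Type*} [NormedAddCommGroup E] [InnerProductSpace ℂ E]
    [TopologicalSpace.SeparableSpace E] {s : Set E}
    (hs : Orthonormal ℂ ((↑) : s → E)) : s.Countable := by
  obtain ⟨t, htc, htd⟩ := TopologicalSpace.exists_countable_dense E
  have hchoice : ∀ x : s, ∃ y : E, y ∈ t ∧ dist (x : E) y < 0.7 := by
    intro x
    obtain ⟨y, hy1, hy2⟩ := htd.exists_dist_lt (x : E) (by norm_num : (0:ℝ) < 0.7)
    exact ⟨y, hy1, hy2⟩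
  choose F hFt hFd using hchoice
  have hdist : ∀ x x' : s, x ≠ x' → (2:ℝ) ≤ dist (x : E) (x' : E) ^ 2 := by
    intro x x' hne
    have horto : ⟪(x : E), (x' : E)⟫ = 0 := hs.2 hne
    have h1 : ‖(x : E) - (x' : E)‖ ^ 2
        = ‖(x : E)‖ ^ 2 - 2 * Complex.re ⟪(x : E), (x' : E)⟫ + ‖(x' : E)‖ ^ 2 :=
      @norm_sub_sq ℂ E _ _ _ _ _
    rw [horto, hs.1 x, hs.1 x'] at h1
    rw [dist_eq_norm]
    rw [h1]
    norm_num
  have hinj : Function.Injective F := by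
    intro x x' hxx
    by_contra hne
    have h1 := hFd x
    have h2 := hFd x'
    rw [hxx] at h1
    have hle : dist (x : E) (x' : E) ≤ dist (x : E) (F x') + dist (x' : E) (F x') := by
      rw [dist_comm (x' : E) (F x')]
      exact dist_triangle _ _ _
    have hd2 := hdist x x' hne
    have hd : dist (x : E) (x' : E) < 1.4 := by linarith
    nlinarith [dist_nonneg (x := (x : E)) (y := (x' : E))]
  have hcnt : Countable s := by
    have hinj2 : Function.Injective (fun x : s => (⟨F x, hFt x⟩ : t)) := by
      intro a b hab
      exact hinj (Subtype.ext_iff.mp hab)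
    haveI := htc.to_subtype
    exact Function.Injective.countable hinj2
  exact Set.countable_coe_iff.mpr hcnt


lemma on_coe (W : Submodule ℂ G) {ι : Type*} (v : ι → ↥W) (hv : Orthonormal ℂ v) :
    Orthonormal ℂ (fun i => (v i : G)) := by
  classical
  rw [orthonormal_iff_ite] at hv ⊢
  intro i j
  have := hv i j
  rwa [Submodule.coe_inner] at this

lemma infinite_basis_index (W : Submodule ℂ G) (hWc : IsClosed (W : Set G))
    (hnf : ¬ FiniteDimensional ℂ ↥W) {w : Set ↥W} (b : HilbertBasis w ℂ ↥W)
    (hb : ⇑b = ((↑) : w → ↥W)) : Infinite ↥w := by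
  haveI : CompleteSpace ↥W := hWc.completeSpace_coe
  by_contra hfin
  haveI : Finite ↥w := not_infinite_iff_finite.mp hfin
  have hwfin : w.Finite := Set.finite_coe_iff.mp this
  apply hnf
  haveI hSfd : FiniteDimensional ℂ ↥(Submodule.span ℂ w) := FiniteDimensional.span_of_finite ℂ hwfin
  have hScl : IsClosed ((Submodule.span ℂ w : Submodule ℂ ↥W) : Set ↥W) :=
    Submodule.closed_of_finiteDimensional _
  have hdense := b.dense_span
  rw [hb, Subtype.range_coe] at hdense
  have hclos : ((Submodule.span ℂ w).topologicalClosure : Set ↥W) = (Submodule.span ℂ w : Set ↥W) := by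
    rw [Submodule.topologicalClosure_coe, hScl.closure_eq]
  have hS : (Submodule.span ℂ w : Submodule ℂ ↥W) = ⊤ := by
    rw [← hdense]
    exact (SetLike.ext' hclos).symm
  rw [hS] at hSfd
  haveI := hSfd
  exact Module.Finite.equiv (Submodule.topEquiv (R := ℂ) (M := ↥W))

lemma bigON (W : Submodule ℂ G) (hWc : IsClosed (W : Set G))
    (hnf : ¬ FiniteDimensional ℂ ↥W) (N : ℕ) :
    ∃ g : Fin N → G, Orthonormal ℂ g ∧ ∀ i, g i ∈ W := by
  haveI : CompleteSpace ↥W := hWc.completeSpace_coe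
  obtain ⟨w, b, hb⟩ := exists_hilbertBasis ℂ ↥W
  haveI := infinite_basis_index W hWc hnf b hb
  set emb : ℕ ↪ ↥w := Infinite.natEmbedding ↥w with hemb
  refine ⟨fun i => ((emb i.val : ↥w) : ↥W), ?_, fun i => SetLike.coe_mem _⟩
  have hON : Orthonormal ℂ (fun x : w => (x : ↥W)) := by
    have := b.orthonormal
    rwa [hb] at this
  have hON2 : Orthonormal ℂ (fun i : Fin N => ((emb i.val : ↥w) : ↥W)) :=
    hON.comp (fun i : Fin N => emb i.val) (fun a b hab => by
      have := emb.injective hab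
      exact Fin.ext (by exact_mod_cast this))
  exact on_coe W _ hON2

lemma natBasis [TopologicalSpace.SeparableSpace G] (W : Submodule ℂ G)
    (hWc : IsClosed (W : Set G)) (hnf : ¬ FiniteDimensional ℂ ↥W) :
    Nonempty (HilbertBasis ℕ ℂ ↥W) := by
  haveI : CompleteSpace ↥W := hWc.completeSpace_coe
  obtain ⟨w, b, hb⟩ := exists_hilbertBasis ℂ ↥W
  haveI hinf := infinite_basis_index W hWc hnf b hb
  have hON : Orthonormal ℂ (fun x : w => (x : ↥W)) := by
    have := b.orthonormal
    rwa [hb] at this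
  have hcount : w.Countable := countable_of_orthonormal hON
  haveI : Countable ↥w := hcount.to_subtype
  have hden : Nonempty (Denumerable ↥w) := nonempty_denumerable_iff.mpr ⟨inferInstance, hinf⟩
  obtain ⟨hd⟩ := hden
  haveI := hd
  set eqv : ↥w ≃ ℕ := Denumerable.eqv ↥w with heqv
  have hON3 : Orthonormal ℂ (fun i : ℕ => b (eqv.symm i)) :=
    b.orthonormal.comp _ eqv.symm.injective
  have hsp : ⊤ ≤ (Submodule.span ℂ (Set.range (fun i : ℕ => b (eqv.symm i)))).topologicalClosure := by
    have hr : Set.range (fun i : ℕ => b (eqv.symm i)) = Set.range ⇑b :=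
      eqv.symm.surjective.range_comp ⇑b
    rw [hr, b.dense_span]
  exact ⟨HilbertBasis.mk hON3 hsp⟩

lemma parseval_basis (W : Submodule ℂ G) (hWc : IsClosed (W : Set G))
    [FiniteDimensional ℂ ↥W] :
    ∃ e : Fin (Module.finrank ℂ ↥W) → G, Orthonormal ℂ e ∧ (∀ j, e j ∈ W) ∧ (∀ j, ‖e j‖ = 1) ∧
      ∀ c ∈ W, (∑ j, ‖(⟪e j, c⟫ : ℂ)‖ ^ 2) = ‖c‖ ^ 2 := by
  haveI : CompleteSpace ↥W := hWc.completeSpace_coe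
  set ob := stdOrthonormalBasis ℂ ↥W with hob
  refine ⟨fun j => ((ob j : ↥W) : G), on_coe W _ ob.orthonormal, fun j => SetLike.coe_mem _,
    ?_, ?_⟩
  · intro j
    have := ob.orthonormal.1 j
    exact this
  · intro c hc
    set c' : ↥W := ⟨c, hc⟩ with hc'
    have h1 : ∀ j, (⟪((ob j : ↥W) : G), c⟫ : ℂ) = ⟪ob j, c'⟫ := by
      intro j
      rw [Submodule.coe_inner]
    rw [Finset.sum_congr rfl (fun j _ => by rw [h1 j])]
    have h2 : ∀ j, (⟪ob j, c'⟫ : ℂ) = ob.repr c' j := fun j => (ob.repr_apply_apply c' j).symm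
    rw [Finset.sum_congr rfl (fun j _ => by rw [h2 j])]
    have h3 : ‖c‖ = ‖ob.repr c'‖ := by
      rw [LinearIsometryEquiv.norm_map]
      rfl
    rw [h3, EuclideanSpace.norm_eq, Real.sq_sqrt (Finset.sum_nonneg fun j _ => by positivity)]

end Stmt8Aux
end

open ContinuousLinearMap Filter Stmt8Aux

/-- For a `C₀₀` contraction `X` on a Hilbert space, the defect spaces
`𝒟_X = closure (range (I - X*X)^{1/2})` and `𝒟_{X*} = closure (range (I - XX*)^{1/2})`
have the same Hilbert space dimension, i.e. they are isometrically isomorphic. -/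
theorem stmt_8
    {G : Type*} [NormedAddCommGroup G] [InnerProductSpace ℂ G] [CompleteSpace G]
    [TopologicalSpace.SeparableSpace G]
    (X : G →L[ℂ] G) (hX : ‖X‖ ≤ 1)
    (h0 : ∀ h : G, Tendsto (fun k : ℕ => (X ^ k) h) atTop (nhds 0))
    (h0s : ∀ h : G, Tendsto (fun k : ℕ => ((adjoint X) ^ k) h) atTop (nhds 0))
    (DX DXs : G →L[ℂ] G) (hDXpos : DX.IsPositive) (hDXspos : DXs.IsPositive)
    (hDXsq : DX ∘L DX = 1 - adjoint X ∘L X)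
    (hDXssq : DXs ∘L DXs = 1 - X ∘L adjoint X) :
    Nonempty (↥(LinearMap.range (DX : G →ₗ[ℂ] G)).topologicalClosure ≃ₗᵢ[ℂ]
      ↥(LinearMap.range (DXs : G →ₗ[ℂ] G)).topologicalClosure) := by
  classical
  set E := (LinearMap.range (DX : G →ₗ[ℂ] G)).topologicalClosure with hE
  set Es := (LinearMap.range (DXs : G →ₗ[ℂ] G)).topologicalClosure with hEs
  have hEc : IsClosed (E : Set G) := Submodule.isClosed_topologicalClosure _
  have hEsc : IsClosed (Es : Set G) := Submodule.isClosed_topologicalClosure _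
  haveI : CompleteSpace ↥E := hEc.completeSpace_coe
  haveI : CompleteSpace ↥Es := hEsc.completeSpace_coe
  have hDsa : adjoint DX = DX := isSelfAdjoint_iff'.mp hDXpos.isSelfAdjoint
  have hDssa : adjoint DXs = DXs := isSelfAdjoint_iff'.mp hDXspos.isSelfAdjoint
  obtain ⟨hintw1, hintw2⟩ := defect_intertwine X DX DXs hDXpos hDXspos hDXsq hDXssq
  have hintw1' : ∀ u : G, X (DX u) = DXs (X u) := fun u => by
    have := ContinuousLinearMap.ext_iff.mp hintw1 u
    simpa using this
  have hintw2' : ∀ u : G, adjoint X (DXs u) = DX (adjoint X u) := fun u => by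
    have := ContinuousLinearMap.ext_iff.mp hintw2 u
    simpa using this
  have hDid : ∀ u v : G, (inner ℂ (DX u) (DX v) : ℂ) = inner ℂ u v - inner ℂ (X u) (X v) := by
    intro u v
    have h1 : DX (DX v) = v - adjoint X (X v) := by
      have := ContinuousLinearMap.ext_iff.mp hDXsq v
      simpa using this
    calc (inner ℂ (DX u) (DX v) : ℂ) = inner ℂ (adjoint DX u) (DX v) := by rw [hDsa]
      _ = inner ℂ u (DX (DX v)) := adjoint_inner_left _ _ _
      _ = inner ℂ u v - inner ℂ (X u) (X v) := by
          rw [h1, inner_sub_right, adjoint_inner_right]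
  have hDsid : ∀ u v : G,
      (inner ℂ (DXs u) (DXs v) : ℂ) = inner ℂ u v - inner ℂ (adjoint X u) (adjoint X v) := by
    intro u v
    have h1 : DXs (DXs v) = v - X (adjoint X v) := by
      have := ContinuousLinearMap.ext_iff.mp hDXssq v
      simpa using this
    calc (inner ℂ (DXs u) (DXs v) : ℂ) = inner ℂ (adjoint DXs u) (DXs v) := by rw [hDssa]
      _ = inner ℂ u (DXs (DXs v)) := adjoint_inner_left _ _ _
      _ = inner ℂ u v - inner ℂ (adjoint X u) (adjoint X v) := by
          rw [h1, inner_sub_right]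
          congr 1
          exact (adjoint_inner_left X (adjoint X v) u).symm
  have hDmv : ∀ u v : G, (inner ℂ (DX u) v : ℂ) = inner ℂ u (DX v) := by
    intro u v
    have := adjoint_inner_left DX v u
    rwa [hDsa] at this
  have hDsmv : ∀ u v : G, (inner ℂ (DXs u) v : ℂ) = inner ℂ u (DXs v) := by
    intro u v
    have := adjoint_inner_left DXs v u
    rwa [hDssa] at this
  have hDmem : ∀ u : G, DX u ∈ E :=
    fun u => Submodule.le_topologicalClosure _ (LinearMap.mem_range_self _ u)
  have hDsmem : ∀ u : G, DXs u ∈ Es :=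
    fun u => Submodule.le_topologicalClosure _ (LinearMap.mem_range_self _ u)
  have hYmem : ∀ g ∈ Es, adjoint X g ∈ E := by
    intro g hg
    have hmapsto : Set.MapsTo (adjoint X) ((LinearMap.range (DXs : G →ₗ[ℂ] G) : Submodule ℂ G) : Set G)
        (E : Set G) := by
      rintro x ⟨u, rfl⟩
      rw [ContinuousLinearMap.coe_coe, hintw2' u]
      exact hDmem _
    have h2 := hmapsto.closure (adjoint X).continuous
    have hg' : g ∈ closure ((LinearMap.range (DXs : G →ₗ[ℂ] G) : Submodule ℂ G) : Set G) := by
      rw [← Submodule.topologicalClosure_coe]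
      exact hg
    have h3 := h2 hg'
    rwa [hEc.closure_eq] at h3
  have hXmem : ∀ g ∈ E, X g ∈ Es := by
    intro g hg
    have hmapsto : Set.MapsTo X ((LinearMap.range (DX : G →ₗ[ℂ] G) : Submodule ℂ G) : Set G)
        (Es : Set G) := by
      rintro x ⟨u, rfl⟩
      rw [ContinuousLinearMap.coe_coe, hintw1' u]
      exact hDsmem _
    have h2 := hmapsto.closure X.continuous
    have hg' : g ∈ closure ((LinearMap.range (DX : G →ₗ[ℂ] G) : Submodule ℂ G) : Set G) := by
      rw [← Submodule.topologicalClosure_coe]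
      exact hg
    have h3 := h2 hg'
    rwa [hEsc.closure_eq] at h3
  -- the two counting principles
  have count1 : ∀ (n : ℕ) (e : Fin n → G), (∀ j, ‖e j‖ = 1) →
      (∀ c ∈ E, (∑ j, ‖(inner ℂ (e j) c : ℂ)‖ ^ 2) = ‖c‖ ^ 2) →
      ∀ (N : ℕ) (gg : Fin N → G), Orthonormal ℂ gg → (∀ i, gg i ∈ Es) → N ≤ n := by
    intro n e hn hp N gg hgON hmem
    exact core_count X DX DXs hDid hDsid hDsmv hintw1' h0 E hDmem n e hn hp N gg hgON
      (fun i => hYmem _ (hmem i))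
  have count2 : ∀ (n : ℕ) (e : Fin n → G), (∀ j, ‖e j‖ = 1) →
      (∀ c ∈ Es, (∑ j, ‖(inner ℂ (e j) c : ℂ)‖ ^ 2) = ‖c‖ ^ 2) →
      ∀ (N : ℕ) (gg : Fin N → G), Orthonormal ℂ gg → (∀ i, gg i ∈ E) → N ≤ n := by
    intro n e hn hp N gg hgON hmem
    have hDid' : ∀ u v : G, (inner ℂ (DX u) (DX v) : ℂ)
        = inner ℂ u v - inner ℂ (adjoint (adjoint X) u) (adjoint (adjoint X) v) := by
      intro u v
      rw [adjoint_adjoint]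
      exact hDid u v
    have hintw2'' : ∀ u : G, (adjoint X) (DXs u) = DX ((adjoint X) u) := hintw2'
    refine core_count (adjoint X) DXs DX hDsid hDid' hDmv hintw2'' h0s Es hDsmem n e hn hp
      N gg hgON (fun i => ?_)
    rw [adjoint_adjoint]
    exact hXmem _ (hmem i)
  by_cases hfE : FiniteDimensional ℂ ↥E <;> by_cases hfEs : FiniteDimensional ℂ ↥Es
  · -- both finite dimensional
    obtain ⟨e, heON, heMem, heN, hePar⟩ := parseval_basis E hEc
    obtain ⟨f, hfON, hfMem, hfN, hfPar⟩ := parseval_basis Es hEsc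
    have h1 : Module.finrank ℂ ↥Es ≤ Module.finrank ℂ ↥E := count1 _ e heN hePar _ f hfON hfMem
    have h2 : Module.finrank ℂ ↥E ≤ Module.finrank ℂ ↥Es := count2 _ f hfN hfPar _ e heON heMem
    have heq : Module.finrank ℂ ↥E = Module.finrank ℂ ↥Es := le_antisymm h2 h1
    exact ⟨(stdOrthonormalBasis ℂ ↥E).repr.trans
      ((LinearIsometryEquiv.piLpCongrLeft 2 ℂ ℂ (finCongr heq)).trans
        (stdOrthonormalBasis ℂ ↥Es).repr.symm)⟩
  · -- E finite dimensional, Es not : contradiction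
    obtain ⟨e, heON, heMem, heN, hePar⟩ := parseval_basis E hEc
    obtain ⟨gg, hggON, hggMem⟩ := bigON Es hEsc hfEs (Module.finrank ℂ ↥E + 1)
    have := count1 _ e heN hePar _ gg hggON hggMem
    omega
  · -- Es finite dimensional, E not : contradiction
    obtain ⟨f, hfON, hfMem, hfN, hfPar⟩ := parseval_basis Es hEsc
    obtain ⟨gg, hggON, hggMem⟩ := bigON E hEc hfE (Module.finrank ℂ ↥Es + 1)
    have := count2 _ f hfN hfPar _ gg hggON hggMem
    omega
  · -- both infinite dimensional
    obtain ⟨bE⟩ := natBasis E hEc hfE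
    obtain ⟨bEs⟩ := natBasis Es hEsc hfEs
    exact ⟨bE.repr.trans bEs.repr.symm⟩
end

section
/- Let T on H = H₁ ⊕ H₀ ⊕ H₋₁ and T on H = H₁' ⊕ H₀' ⊕ H₋₁' be two upper triangular representations of the same operator, and suppose the maximal T-invariant subspace M₁ on which T is isometric satisfies M₁ ∩ H₀ = {0}. Define Y = P_{H₀' ⊕ H₋₁'}|_{H₁ ⊕ H₀}. Then ker Y = H₁ ∩ H₁', provided H₁, H₁' ⊆ M₁. -/
open ContinuousLinearMap

lemma isom_sub {H : Type*} [NormedAddCommGroup H] [InnerProductSpace ℂ H]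
    (T : H →L[ℂ] H) (hT : ∀ u : H, ‖T u‖ ≤ ‖u‖) (u v : H)
    (hu : ‖T u‖ = ‖u‖) (hv : ‖T v‖ = ‖v‖) : ‖T (u - v)‖ = ‖u - v‖ := by
  have hpar1 := parallelogram_law_with_norm ℂ u v
  have hpar2 := parallelogram_law_with_norm ℂ (T u) (T v)
  rw [hu, hv] at hpar2
  have h1 : ‖T (u + v)‖ ≤ ‖u + v‖ := hT _
  have h2 : ‖T (u - v)‖ ≤ ‖u - v‖ := hT _
  have e1 : T (u + v) = T u + T v := map_add T u v
  have e2 : T (u - v) = T u - T v := map_sub T u v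
  rw [e1] at h1
  rw [e2] at h2 ⊢
  have hsq : ‖T u - T v‖ * ‖T u - T v‖ = ‖u - v‖ * ‖u - v‖ := by
    nlinarith [mul_self_le_mul_self (norm_nonneg (T u + T v)) h1,
      mul_self_le_mul_self (norm_nonneg (T u - T v)) h2]
  exact (mul_self_inj (norm_nonneg _) (norm_nonneg _)).mp hsq

/-- Two upper triangular representations of the same contraction `T` on
`H = H₁ ⊕ H₀ ⊕ H₋₁ = H₁' ⊕ H₀' ⊕ H₋₁'`; if `H₁, H₁' ⊆ M₁` (the maximal invariant
subspace on which `T` is isometric) and `M₁ ∩ H₀ = {0}`, then the kernel of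
`Y = P_{H₀' ⊕ H₋₁'}|_{H₁ ⊕ H₀}` (with `H₀' ⊕ H₋₁' = H₁'^⊥`) is `H₁ ∩ H₁'`. -/
theorem stmt_10
    {H : Type*} [NormedAddCommGroup H] [InnerProductSpace ℂ H] [CompleteSpace H]
    (H1 H0 Hm1 H1' H0' Hm1' : Submodule ℂ H)
    [CompleteSpace H1] [CompleteSpace H0] [CompleteSpace Hm1]
    [CompleteSpace H1'] [CompleteSpace H0'] [CompleteSpace Hm1']
    (horth10 : H1 ⟂ H0) (horth1m : H1 ⟂ Hm1) (horth0m : H0 ⟂ Hm1)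
    (hspan : H1 ⊔ H0 ⊔ Hm1 = ⊤)
    (horth10' : H1' ⟂ H0') (horth1m' : H1' ⟂ Hm1') (horth0m' : H0' ⟂ Hm1')
    (hspan' : H1' ⊔ H0' ⊔ Hm1' = ⊤)
    (T : H →L[ℂ] H) (hT : ‖T‖ ≤ 1)
    (hinv1 : ∀ x ∈ H1, T x ∈ H1) (hinv10 : ∀ x ∈ H1 ⊔ H0, T x ∈ H1 ⊔ H0)
    (hinv1' : ∀ x ∈ H1', T x ∈ H1') (hinv10' : ∀ x ∈ H1' ⊔ H0', T x ∈ H1' ⊔ H0')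
    (hH1M : (H1 : Set H) ⊆ {h : H | ∀ k : ℕ, ‖(T ^ (k + 1)) h‖ = ‖(T ^ k) h‖})
    (hH1'M : (H1' : Set H) ⊆ {h : H | ∀ k : ℕ, ‖(T ^ (k + 1)) h‖ = ‖(T ^ k) h‖})
    (hM1H0 : ∀ h ∈ H0, (∀ k : ℕ, ‖(T ^ (k + 1)) h‖ = ‖(T ^ k) h‖) → h = 0) :
    ∀ x ∈ H1 ⊔ H0, (Submodule.orthogonalProjection H1'ᗮ x = 0 ↔ x ∈ H1 ⊓ H1') := by
  have hTc : ∀ u : H, ‖T u‖ ≤ ‖u‖ := fun u => by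
    calc ‖T u‖ ≤ ‖T‖ * ‖u‖ := T.le_opNorm u
    _ ≤ 1 * ‖u‖ := by nlinarith [norm_nonneg u]
    _ = ‖u‖ := one_mul _
  intro x hx
  rw [Submodule.orthogonalProjectionOnto_eq_zero_iff, Submodule.orthogonal_orthogonal]
  constructor
  · intro hx'
    refine ⟨?_, hx'⟩
    obtain ⟨a, ha, b, hb, hab⟩ := Submodule.mem_sup.mp hx
    have hxM := hH1'M hx'
    have haM := hH1M ha
    have hbM : ∀ k : ℕ, ‖(T ^ (k + 1)) b‖ = ‖(T ^ k) b‖ := by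
      intro k
      have hb' : b = x - a := by rw [← hab]; abel
      have e : ∀ y : H, (T ^ (k + 1)) y = T ((T ^ k) y) := by
        intro y
        rw [pow_succ']; rfl
      rw [hb', e, map_sub (T ^ k)]
      have hu : ‖T ((T ^ k) x)‖ = ‖(T ^ k) x‖ := by rw [← e]; exact hxM k
      have hv : ‖T ((T ^ k) a)‖ = ‖(T ^ k) a‖ := by rw [← e]; exact haM k
      calc ‖T ((T ^ k) x - (T ^ k) a)‖ = ‖(T ^ k) x - (T ^ k) a‖ :=
            isom_sub T hTc _ _ hu hv
        _ = ‖(T ^ k) x - (T ^ k) a‖ := rfl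
    have hb0 : b = 0 := hM1H0 b hb hbM
    rw [← hab, hb0, add_zero]
    exact ha
  · exact fun h => h.2
end
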